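/- The complete graph K_2 is multiplicative: for all graphs G and H, if there is a graph homomorphism G × H -> K_2, then there is a graph homomorphism G -> K_2 or a graph homomorphism H -> K_2. -/

import Mathlib

open SimpleGraph

variable {α β γ : Type*}

/-- Tensor (categorical) product of simple graphs. -/
def tensor (G : SimpleGraph α) (H : SimpleGraph β) : SimpleGraph (α × β) where
  Adj x y := G.Adj x.1 y.1 ∧ H.Adj x.2 y.2
  symm := ⟨fun _ _ ⟨h1, h2⟩ => ⟨h1.symm, h2.symm⟩⟩
  loopless := ⟨fun x ⟨h1, _⟩ => G.ne_of_adj h1 rfl⟩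

/-- Projection of a walk in the tensor product to the first factor. -/
def projG {G : SimpleGraph α} {H : SimpleGraph β} :
    ∀ {x y : α × β}, (tensor G H).Walk x y → G.Walk x.1 y.1
  | _, _, SimpleGraph.Walk.nil => SimpleGraph.Walk.nil
  | _, _, SimpleGraph.Walk.cons h p => SimpleGraph.Walk.cons h.1 (projG p)

/-- Projection of a walk in the tensor product to the second factor. -/
def projH {G : SimpleGraph α} {H : SimpleGraph β} :
    ∀ {x y : α × β}, (tensor G H).Walk x y → H.Walk x.2 y.2
  | _, _, SimpleGraph.Walk.nil => SimpleGraph.Walk.nil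
  | _, _, SimpleGraph.Walk.cons h p => SimpleGraph.Walk.cons h.2 (projH p)

/-- One-step reduction: deleting a consecutive backtracking pair `e, e⁻¹`. -/
inductive RedStep (G : SimpleGraph α) : ∀ {u v : α}, G.Walk u v → G.Walk u v → Prop
  | cancel {u v a b : α} (h : G.Adj a b) (p : G.Walk u a) (q : G.Walk a v) :
      RedStep G (p.append (SimpleGraph.Walk.cons h (SimpleGraph.Walk.cons h.symm q)))
        (p.append q)

/-- A walk is reduced if no backtracking cancellation applies to it. -/
def Reduced {G : SimpleGraph α} {u v : α} (W : G.Walk u v) : Prop :=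
  ∀ W', ¬ RedStep G W W'

/-- Homotopy of walks: equivalence generated by cancellations. -/
def RedEquiv (G : SimpleGraph α) {u v : α} (W W' : G.Walk u v) : Prop :=
  Relation.EqvGen (fun p q => RedStep G p q) W W'

/-- One elementary step of square-equivalence. -/
inductive SqStep (G : SimpleGraph α) : ∀ {u v : α}, G.Walk u v → G.Walk u v → Prop
  | cancel {u v a b : α} (h : G.Adj a b) (p : G.Walk u a) (q : G.Walk a v) :
      SqStep G (p.append (SimpleGraph.Walk.cons h (SimpleGraph.Walk.cons h.symm q)))
        (p.append q)
  | square {u v a b c d : α} (hab : G.Adj a b) (hbc : G.Adj b c) (had : G.Adj a d)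
      (hdc : G.Adj d c) (p : G.Walk u a) (q : G.Walk c v) :
      SqStep G (p.append (SimpleGraph.Walk.cons hab (SimpleGraph.Walk.cons hbc q)))
        (p.append (SimpleGraph.Walk.cons had (SimpleGraph.Walk.cons hdc q)))

/-- Square-equivalence of walks. -/
def SqEquiv (G : SimpleGraph α) {u v : α} (W W' : G.Walk u v) : Prop :=
  Relation.EqvGen (fun p q => SqStep G p q) W W'

/-- Natural-number power of a closed walk (iterated concatenation). -/
def wpow {G : SimpleGraph α} {u : α} (W : G.Walk u u) : ℕ → G.Walk u u
  | 0 => SimpleGraph.Walk.nil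
  | n + 1 => W.append (wpow W n)

/-- Integer power of a closed walk. -/
def wzpow {G : SimpleGraph α} {u : α} (W : G.Walk u u) : ℤ → G.Walk u u
  | Int.ofNat n => wpow W n
  | Int.negSucc n => wpow W.reverse (n + 1)

/-- A walk `p` is a prefix of `q` (same starting vertex). -/
def WalkPrefix {G : SimpleGraph α} {u x y : α} (p : G.Walk u x) (q : G.Walk u y) : Prop :=
  ∃ r : G.Walk x y, q = p.append r

/-- `K` is square-free: every square is trivial. -/
def SqFree (K : SimpleGraph γ) : Prop :=
  ∀ a b c d : γ, K.Adj a b → K.Adj b c → K.Adj c d → K.Adj d a → a = c ∨ b = d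

/-- The circular clique `K_{p/q}` on `ZMod p`. -/
def circClique (p q : ℕ) : SimpleGraph (ZMod p) where
  Adj i j := i ≠ j ∧ ∃ k : ℕ, q ≤ k ∧ k ≤ p - q ∧ (j = i + (k : ZMod p) ∨ i = j + (k : ZMod p))
  symm := by
    constructor
    rintro i j ⟨hne, k, h1, h2, h3 | h3⟩
    · exact ⟨hne.symm, k, h1, h2, Or.inr h3⟩
    · exact ⟨hne.symm, k, h1, h2, Or.inl h3⟩
  loopless := ⟨fun i h => h.1 rfl⟩


/-!
An odd closed walk `p` in `G` and an odd closed walk `q` in `H` can be traversed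
`|q|` resp. `|p|` times, giving closed walks of the common odd length `|p| |q|`; running them
in lockstep is an odd closed walk in `G × H`. So if neither factor is bipartite, neither is
the product.
-/

lemma wpow_length {G : SimpleGraph α} {u : α} (W : G.Walk u u) (n : ℕ) :
    (wpow W n).length = n * W.length := by
  induction n with
  | zero => simp [wpow]
  | succ n ih => rw [wpow, Walk.length_append, ih, Nat.succ_mul, Nat.add_comm]

lemma exists_tensor_walk_of_length_eq {G : SimpleGraph α} {H : SimpleGraph β} {a a' : α}
    (p : G.Walk a a') {b b' : β} (q : H.Walk b b') (hpq : p.length = q.length) :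
    ∃ w : (tensor G H).Walk (a, b) (a', b'), w.length = p.length := by
  induction p generalizing b with
  | nil =>
    cases q with
    | nil => exact ⟨Walk.nil, rfl⟩
    | cons _ _ => simp at hpq
  | cons hG p ih =>
    cases q with
    | nil => simp at hpq
    | cons hH q =>
      obtain ⟨w, hw⟩ := ih q (by simpa using hpq)
      exact ⟨Walk.cons (show (tensor G H).Adj _ _ from ⟨hG, hH⟩) w, by simp [hw]⟩

lemma exists_odd_loop_tensor {G : SimpleGraph α} {H : SimpleGraph β} {u : α} {v : β}
    (p : G.Walk u u) (q : H.Walk v v) (hp : Odd p.length) (hq : Odd q.length) :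
    ∃ w : (tensor G H).Walk (u, v) (u, v), Odd w.length := by
  have hlen : (wpow p q.length).length = (wpow q p.length).length := by
    rw [wpow_length, wpow_length, Nat.mul_comm]
  obtain ⟨w, hw⟩ := exists_tensor_walk_of_length_eq _ _ hlen
  exact ⟨w, by rw [hw, wpow_length]; exact hq.mul hp⟩

/-- `K₂` is multiplicative: if `G × H` is 2-colorable (bipartite), then
`G` or `H` is 2-colorable. -/
theorem K2_multiplicative (G : SimpleGraph α) (H : SimpleGraph β)
    (h : (tensor G H).Colorable 2) : G.Colorable 2 ∨ H.Colorable 2 := by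
  simp only [two_colorable_iff_forall_loop_even, ← Nat.not_odd_iff_even] at h ⊢
  by_contra! hGH
  obtain ⟨⟨u, p, hp⟩, v, q, hq⟩ := hGH
  obtain ⟨w, hw⟩ := exists_odd_loop_tensor p q hp hq
  exact h _ w hw
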